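/- Fix integers 2 ≤ r < s and define A = {0} ∪ ⋃_{i,ℓ≥0} r^ℓ · [r^i, r^i + r^{(i+1)/2}] and B = {0} ∪ ⋃_{j,m≥0} s^m · [s^j, s^j + s^{(j+1)/2}] (intervals intersected with ℕ₀). Then: the mass dimensions of A and B exist and equal 1/2; rA ⊆ A and sB ⊆ B; Φ_r(A) = A and Φ_s(B) = B; and the upper mass dimension of A + B is at most 4/5. In particular dim_M(A+B) < min(dim_M A + dim_M B, 1). -/

import Mathlib

open Filter Topology Pointwise

/-- `A = {0} ∪ ⋃_{i,ℓ ≥ 0} r^ℓ · ([r^i, r^i + r^{(i+1)/2}] ∩ ℕ₀)`. -/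
def exSet (r : ℕ) : Set ℕ :=
  {0} ∪ {m : ℕ | ∃ i l n : ℕ, m = r ^ l * n ∧
    (r : ℝ) ^ i ≤ (n : ℝ) ∧ (n : ℝ) ≤ (r : ℝ) ^ i + (r : ℝ) ^ (((i : ℝ) + 1) / 2)}

/-- The upper mass dimension of `A ⊆ ℕ₀`. -/
noncomputable def upperMassDim (A : Set ℕ) : ℝ :=
  limsup (fun N : ℕ => Real.log (({n ∈ A | n < N}).ncard : ℝ) / Real.log N) atTop

/-!
Write `exSet t` as `{0}` together with the blocks `t^l · I_i`, `I_i = [t^i, t^i + t^{(i+1)/2}]`.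
A block meeting `[0, N)` has `t^{l+i} < N`, so there are `O(log² N)` of them and each has at most
`2 √t · t^{i/2} ≤ 2 √(tN)` elements; on the other hand the single block `I_i` with
`t^{i+2} ≤ N < t^{i+3}` lies below `N` and has more than `√N / t` elements. Hence the counting
function of `exSet t` is `N^{1/2}` up to logarithmic factors.

For the sumset, let `P ⊆ r^l · I_i` and `Q ⊆ s^m · J_j` be two blocks cut off at `N`. Then
`|P + Q| ≤ |P| |Q| ≲ r^{i/2} s^{j/2}`, and `P + Q` lies in an interval of length
`≲ r^l r^{i/2} + s^m s^{j/2}`. The product of the two bounds is `O(N^{3/2})` because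
`r^{l+i}, s^{m+j} < N`, so `|P + Q| = O(N^{3/4})`; summing over the `O(log⁴ N)` pairs of blocks
gives `dim_M (A + B) ≤ 3/4`.
-/

lemma one_le_log_natCast {N : ℕ} (hN : 3 ≤ N) : 1 ≤ Real.log N := by
  rw [Real.le_log_iff_exp_le (by positivity)]
  calc Real.exp 1 ≤ 3 := (Real.exp_one_lt_d9.trans (by norm_num)).le
    _ ≤ N := by exact_mod_cast hN

lemma natLog_add_one_le_log {t N : ℕ} (ht : 2 ≤ t) (hN : 3 ≤ N) :
    (Nat.log t N + 1 : ℝ) ≤ 3 * Real.log N := by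
  have hlogN := one_le_log_natCast hN
  have hlogt : 1 / 2 ≤ Real.log t :=
    calc (1 / 2 : ℝ) ≤ Real.log 2 := by linarith [Real.log_two_gt_d9]
      _ ≤ Real.log t := Real.log_le_log two_pos (by exact_mod_cast ht)
  have hlogb : Real.logb t N ≤ 2 * Real.log N := by
    rw [Real.logb, div_le_iff₀ (by linarith)]
    nlinarith
  linarith [Real.natLog_le_logb N t]

lemma tendsto_log_mul_div_log {C : ℝ} (hC : 0 < C) (k : ℕ) (a : ℝ) :
    Tendsto (fun N : ℕ => Real.log (C * Real.log N ^ k * (N : ℝ) ^ a) / Real.log N)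
      atTop (𝓝 a) := by
  have hlog : Tendsto (fun N : ℕ => Real.log N) atTop atTop :=
    Real.tendsto_log_atTop.comp tendsto_natCast_atTop_atTop
  have hlim : Tendsto (fun N : ℕ => Real.log C / Real.log N +
      k * (Real.log (Real.log N) / Real.log N) + a) atTop (𝓝 (0 + k * 0 + a)) :=
    ((tendsto_const_nhds.div_atTop hlog).add
      ((Real.isLittleO_log_id_atTop.tendsto_div_nhds_zero.comp hlog).const_mul _)).add_const a
  rw [mul_zero, add_zero, zero_add] at hlim
  refine hlim.congr' ?_
  filter_upwards [eventually_ge_atTop 3] with N hN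
  have hlogN := one_le_log_natCast hN
  have hN0 : (0 : ℝ) < N := by exact_mod_cast (by omega : 0 < N)
  rw [Real.log_mul (by positivity) (by positivity), Real.log_mul (by positivity) (by positivity),
    Real.log_pow, Real.log_rpow hN0]
  field_simp

lemma tendsto_log_div_log_of_le_of_le {f : ℕ → ℝ} {a c C : ℝ} {k : ℕ} (hc : 0 < c) (hC : 0 < C)
    (hlow : ∀ᶠ N : ℕ in atTop, c * (N : ℝ) ^ a ≤ f N)
    (hup : ∀ᶠ N : ℕ in atTop, f N ≤ C * Real.log N ^ k * (N : ℝ) ^ a) :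
    Tendsto (fun N => Real.log (f N) / Real.log N) atTop (𝓝 a) := by
  have hlim := tendsto_log_mul_div_log hc 0 a
  simp only [pow_zero, mul_one] at hlim
  refine tendsto_of_tendsto_of_tendsto_of_le_of_le' hlim (tendsto_log_mul_div_log hC k a) ?_ ?_
  all_goals
    filter_upwards [hlow, hup, eventually_ge_atTop 3] with N hl hu hN
    have hlogN := one_le_log_natCast hN
    have hpos : 0 < c * (N : ℝ) ^ a :=
      mul_pos hc (Real.rpow_pos_of_pos (by exact_mod_cast (by omega : 0 < N)) a)
    have hf : 0 < f N := hpos.trans_le hl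
    gcongr

lemma limsup_log_div_log_le {f : ℕ → ℝ} {a C : ℝ} {k : ℕ} (hC : 0 < C)
    (hone : ∀ᶠ N : ℕ in atTop, 1 ≤ f N)
    (hup : ∀ᶠ N : ℕ in atTop, f N ≤ C * Real.log N ^ k * (N : ℝ) ^ a) :
    limsup (fun N => Real.log (f N) / Real.log N) atTop ≤ a := by
  have hlim := tendsto_log_mul_div_log hC k a
  refine (limsup_le_limsup ?_ ?_ hlim.isBoundedUnder_le).trans_eq hlim.limsup_eq
  · filter_upwards [hone, hup, eventually_ge_atTop 3] with N h1 hu hN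
    have hlogN := one_le_log_natCast hN
    gcongr
  · refine isCoboundedUnder_le_of_eventually_le _ (x := 0) ?_
    filter_upwards [hone] with N h1
    exact div_nonneg (Real.log_nonneg h1) (Real.log_natCast_nonneg N)

lemma upperMassDim_le {A : Set ℕ} (h0 : 0 ∈ A) {a C : ℝ} {k : ℕ} (hC : 0 < C)
    (hup : ∀ᶠ N : ℕ in atTop,
      (({n ∈ A | n < N}).ncard : ℝ) ≤ C * Real.log N ^ k * (N : ℝ) ^ a) :
    upperMassDim A ≤ a := by
  refine limsup_log_div_log_le hC ?_ hup
  filter_upwards [eventually_ge_atTop 1] with N hN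
  have hfin : ({n ∈ A | n < N}).Finite := (Set.finite_Iio N).subset fun _ hn => hn.2
  exact_mod_cast (Set.ncard_pos hfin).2 ⟨0, h0, hN⟩

lemma Finset.ncard_biUnion_le_card_mul {ι α : Type*} (F : Finset ι) (S : ι → Set α) {c : ℝ}
    (h : ∀ i ∈ F, ((S i).ncard : ℝ) ≤ c) : ((⋃ i ∈ F, S i).ncard : ℝ) ≤ F.card * c :=
  calc ((⋃ i ∈ F, S i).ncard : ℝ) ≤ ∑ i ∈ F, ((S i).ncard : ℝ) := by
        exact_mod_cast F.set_ncard_biUnion_le S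
    _ ≤ F.card • c := Finset.sum_le_card_nsmul _ _ _ h
    _ = F.card * c := nsmul_eq_mul _ _

lemma Set.ncard_add_sq_le_of_subset_Icc {P Q : Set ℕ} {a b d e : ℕ}
    (hP : P ⊆ Set.Icc a (a + d)) (hQ : Q ⊆ Set.Icc b (b + e)) :
    (P + Q).ncard ^ 2 ≤ P.ncard * Q.ncard * (d + e + 1) := by
  have hprod : (P + Q).ncard ≤ P.ncard * Q.ncard := Set.natCard_add_le
  have hspan : (P + Q).ncard ≤ d + e + 1 :=
    calc (P + Q).ncard ≤ (Set.Icc (a + b) (a + d + (b + e))).ncard :=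
          Set.ncard_le_ncard ((Set.add_subset_add hP hQ).trans (Set.Icc_add_Icc_subset _ _ _ _))
            (Set.finite_Icc _ _)
      _ = d + e + 1 := by simp only [Set.ncard_Icc_nat]; omega
  rw [sq]
  exact Nat.mul_le_mul hprod hspan

lemma Set.ncard_insert_zero_add_insert_zero_le {U V : Set ℕ} (hU : U.Finite) (hV : V.Finite) :
    (insert 0 U + insert 0 V).ncard ≤ 1 + U.ncard + V.ncard + (U + V).ncard := by
  have hsub : insert 0 U + insert 0 V ⊆ insert 0 (U ∪ V ∪ (U + V)) := by
    rintro _ ⟨a, ha, b, hb, rfl⟩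
    rcases ha with rfl | ha <;> rcases hb with rfl | hb
    · simp
    · simp [hb]
    · simp [ha]
    · exact Or.inr (Or.inr (Set.add_mem_add ha hb))
  calc (insert 0 U + insert 0 V).ncard ≤ (insert 0 (U ∪ V ∪ (U + V))).ncard :=
        Set.ncard_le_ncard hsub (((hU.union hV).union (hU.add hV)).insert 0)
    _ ≤ (U ∪ V ∪ (U + V)).ncard + 1 := Set.ncard_insert_le _ _
    _ ≤ U.ncard + V.ncard + (U + V).ncard + 1 := by
        gcongr
        exact (Set.ncard_union_le _ _).trans (by gcongr; exact Set.ncard_union_le _ _)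
    _ = 1 + U.ncard + V.ncard + (U + V).ncard := by ring

lemma Set.add_inter_Iio_subset (A B : Set ℕ) (N : ℕ) :
    (A + B) ∩ Set.Iio N ⊆ A ∩ Set.Iio N + B ∩ Set.Iio N := by
  rintro _ ⟨⟨a, ha, b, hb, rfl⟩, h⟩
  replace h : a + b < N := h
  exact ⟨a, ⟨ha, by rw [Set.mem_Iio]; omega⟩, b, ⟨hb, by rw [Set.mem_Iio]; omega⟩, rfl⟩

lemma natCast_le_add_iff_le_add_floor (a n : ℕ) {x : ℝ} (hx : 0 ≤ x) :
    (n : ℝ) ≤ a + x ↔ n ≤ a + ⌊x⌋₊ := by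
  rw [add_comm (a : ℝ), add_comm a, ← Nat.floor_add_natCast hx, Nat.le_floor_iff (by positivity)]

lemma Real.rpow_succ_div_two {x : ℝ} (hx : 0 ≤ x) (i : ℕ) :
    x ^ (((i : ℝ) + 1) / 2) = √x ^ (i + 1) := by
  rw [Real.sqrt_eq_rpow, ← Real.rpow_natCast, ← Real.rpow_mul hx]
  push_cast
  ring_nf

lemma Real.rpow_three_fourths_sq {x : ℝ} (hx : 0 ≤ x) : (x ^ (3 / 4 : ℝ)) ^ 2 = √x ^ 3 := by
  rw [Real.sqrt_eq_rpow, ← Real.rpow_natCast, ← Real.rpow_natCast, ← Real.rpow_mul hx,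
    ← Real.rpow_mul hx]
  norm_num

lemma Real.sqrt_pow {x : ℝ} (hx : 0 ≤ x) (k : ℕ) : √(x ^ k) = √x ^ k := by
  rw [Real.sqrt_eq_iff_eq_sq (by positivity) (by positivity), ← pow_mul, mul_comm, pow_mul,
    Real.sq_sqrt hx]

lemma sqrt_pow_le_sqrt {t k N : ℕ} (h : t ^ k ≤ N) : √(t : ℝ) ^ k ≤ √(N : ℝ) := by
  rw [← Real.sqrt_pow (Nat.cast_nonneg t)]
  exact Real.sqrt_le_sqrt (by exact_mod_cast h)

namespace exSet

noncomputable def width (t i : ℕ) : ℕ := ⌊√(t : ℝ) ^ (i + 1)⌋₊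

/-- The block `t^l · ([t^i, t^i + t^{(i+1)/2}] ∩ ℕ)`. -/
def block (t l i : ℕ) : Set ℕ := (t ^ l * ·) '' Set.Icc (t ^ i) (t ^ i + width t i)

lemma mem_block_iff {t l i m : ℕ} :
    m ∈ block t l i ↔ ∃ n, t ^ l * n = m ∧ t ^ i ≤ n ∧ n ≤ t ^ i + width t i := by
  simp only [block, Set.mem_image, Set.mem_Icc]
  aesop

theorem eq_insert_iUnion_block (t : ℕ) : exSet t = insert 0 (⋃ l, ⋃ i, block t l i) := by
  ext m
  simp only [exSet, Set.singleton_union, Set.mem_insert_iff, Set.mem_ofPred_eq, Set.mem_iUnion,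
    mem_block_iff, Real.rpow_succ_div_two (Nat.cast_nonneg t), ← Nat.cast_pow, Nat.cast_le,
    natCast_le_add_iff_le_add_floor _ _ (by positivity : (0 : ℝ) ≤ √(t : ℝ) ^ _)]
  aesop

lemma zero_mem (t : ℕ) : 0 ∈ exSet t := by
  simp [eq_insert_iUnion_block]

lemma block_subset (t l i : ℕ) : block t l i ⊆ exSet t := by
  rw [eq_insert_iUnion_block]
  exact (Set.subset_iUnion₂ (s := fun l i => block t l i) l i).trans (Set.subset_insert _ _)

lemma one_mem_block (t : ℕ) : 1 ∈ block t 0 0 :=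
  mem_block_iff.2 ⟨1, by simp⟩

theorem mul_mem {t n : ℕ} (hn : n ∈ exSet t) : t * n ∈ exSet t := by
  rw [eq_insert_iUnion_block] at hn ⊢
  simp only [Set.mem_insert_iff, Set.mem_iUnion, mem_block_iff] at hn ⊢
  rcases hn with rfl | ⟨l, i, k, rfl, hk⟩
  · exact Or.inl (mul_zero t)
  · exact Or.inr ⟨l + 1, i, k, by ring, hk⟩

lemma width_succ_div_le {t : ℕ} (ht : 1 ≤ t) (i : ℕ) : width t (i + 1) / t ≤ width t i := by
  have hρ : 1 ≤ √(t : ℝ) := Real.one_le_sqrt.2 (by exact_mod_cast ht)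
  have hsq : √(t : ℝ) ^ (i + 1 + 1) / t = √(t : ℝ) ^ i := by
    rw [pow_succ, pow_succ, mul_assoc, ← sq, Real.sq_sqrt (Nat.cast_nonneg t),
      mul_div_cancel_right₀ _ (by positivity)]
  rw [width, ← Nat.floor_div_natCast, hsq]
  exact Nat.floor_le_floor (pow_le_pow_right₀ hρ (Nat.le_succ i))

lemma width_zero_le {t : ℕ} (ht : 1 ≤ t) : width t 0 ≤ t := by
  refine Nat.floor_le_of_le ?_
  rw [pow_one]
  exact Real.sqrt_le_left (by positivity) |>.2 (by nlinarith [(Nat.one_le_cast (α := ℝ)).2 ht])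

theorem div_mem {t n : ℕ} (ht : 2 ≤ t) (hn : n ∈ exSet t) : n / t ∈ exSet t := by
  rw [eq_insert_iUnion_block] at hn
  simp only [Set.mem_insert_iff, Set.mem_iUnion, mem_block_iff] at hn
  rcases hn with rfl | ⟨l, i, k, rfl, hk₁, hk₂⟩
  · simpa using zero_mem t
  rcases l with _ | l
  · rw [pow_zero, one_mul]
    rcases i with _ | i
    · have : k / t ≤ 1 := by
        have := width_zero_le (t := t) (by omega)
        rw [Nat.div_le_iff_le_mul_add_pred (by omega)]
        rw [pow_zero] at hk₂
        omega
      interval_cases k / t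
      · exact zero_mem t
      · exact block_subset t 0 0 (one_mem_block t)
    · refine block_subset t 0 i (mem_block_iff.2 ⟨k / t, one_mul _, ?_, ?_⟩)
      · rw [Nat.le_div_iff_mul_le (by omega), ← pow_succ]
        exact hk₁
      · calc k / t ≤ (t ^ i * t + width t (i + 1)) / t :=
              Nat.div_le_div_right (pow_succ t i ▸ hk₂)
          _ = t ^ i + width t (i + 1) / t := by rw [mul_comm, Nat.mul_add_div (by omega)]
          _ ≤ t ^ i + width t i := by gcongr; exact width_succ_div_le (by omega) i
  · refine block_subset t l i (mem_block_iff.2 ⟨k, ?_, hk₁, hk₂⟩)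
    rw [pow_succ, mul_comm _ t, mul_assoc, Nat.mul_div_cancel_left _ (by omega)]

theorem image_div {t : ℕ} (ht : 2 ≤ t) : (· / t) '' exSet t = exSet t := by
  refine (Set.image_subset_iff.2 fun n hn => div_mem ht hn).antisymm fun n hn => ?_
  exact ⟨t * n, mul_mem hn, Nat.mul_div_cancel_left n (by omega)⟩

lemma width_le (t i : ℕ) : (width t i : ℝ) ≤ √(t : ℝ) ^ (i + 1) :=
  Nat.floor_le (by positivity)

lemma block_subset_Icc (t l i : ℕ) :
    block t l i ⊆ Set.Icc (t ^ (l + i)) (t ^ (l + i) + t ^ l * width t i) := by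
  rintro _ ⟨k, ⟨hk₁, hk₂⟩, rfl⟩
  rw [pow_add]
  constructor <;> nlinarith [Nat.zero_le (t ^ l)]

lemma pow_lt_of_mem_block_inter_Iio {t l i m N : ℕ} (hm : m ∈ block t l i ∩ Set.Iio N) :
    t ^ (l + i) < N :=
  (block_subset_Icc t l i hm.1).1.trans_lt hm.2

lemma ncard_block_inter_le {t : ℕ} (ht : 1 ≤ t) (l i : ℕ) (S : Set ℕ) :
    ((block t l i ∩ S).ncard : ℝ) ≤ 2 * √(t : ℝ) * √(t : ℝ) ^ i := by
  have hcard : (block t l i ∩ S).ncard ≤ width t i + 1 :=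
    (Set.ncard_inter_le_ncard_left _ _ ((Set.finite_Icc _ _).image _)).trans
      ((Set.ncard_image_le (Set.finite_Icc _ _)).trans (by simp; omega))
  have h1 : 1 ≤ √(t : ℝ) ^ (i + 1) := one_le_pow₀ (Real.one_le_sqrt.2 (by exact_mod_cast ht))
  have : ((block t l i ∩ S).ncard : ℝ) ≤ width t i + 1 := by exact_mod_cast hcard
  linarith [width_le t i, pow_succ' √(t : ℝ) i]

lemma ncard_block_inter_Iio_le {t : ℕ} (ht : 1 ≤ t) (l i N : ℕ) :
    ((block t l i ∩ Set.Iio N).ncard : ℝ) ≤ 2 * √(t : ℝ) * √(N : ℝ) := by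
  rcases (block t l i ∩ Set.Iio N).eq_empty_or_nonempty with h | ⟨m, hm⟩
  · rw [h, Set.ncard_empty, Nat.cast_zero]
    positivity
  have hi : √(t : ℝ) ^ i ≤ √(N : ℝ) := sqrt_pow_le_sqrt <|
    (Nat.pow_le_pow_right (by omega) (Nat.le_add_left i l)).trans
      (pow_lt_of_mem_block_inter_Iio hm).le
  exact (ncard_block_inter_le ht l i _).trans (by gcongr)

lemma sqrt_pow_mul_sqrt_pow_le {t l i m N : ℕ} (hm : m ∈ block t l i ∩ Set.Iio N) :
    √(t : ℝ) ^ l * √(t : ℝ) ^ i ≤ √(N : ℝ) := by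
  rw [← pow_add]
  exact sqrt_pow_le_sqrt (pow_lt_of_mem_block_inter_Iio hm).le

lemma pow_mul_width_le (t l i : ℕ) :
    (t : ℝ) ^ l * width t i ≤ √(t : ℝ) * (√(t : ℝ) ^ l) ^ 2 * √(t : ℝ) ^ i :=
  calc (t : ℝ) ^ l * width t i ≤ (√(t : ℝ) ^ 2) ^ l * √(t : ℝ) ^ (i + 1) := by
        rw [Real.sq_sqrt (Nat.cast_nonneg t)]
        gcongr
        exact width_le t i
    _ = √(t : ℝ) * (√(t : ℝ) ^ l) ^ 2 * √(t : ℝ) ^ i := by ring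

lemma ncard_block_add_block_le {r s : ℕ} (hr : 1 ≤ r) (hs : 1 ≤ s) (l i m j N : ℕ) :
    ((block r l i ∩ Set.Iio N + block s m j ∩ Set.Iio N).ncard : ℝ) ≤
      4 * √(r : ℝ) * √(s : ℝ) * (N : ℝ) ^ (3 / 4 : ℝ) := by
  set P := block r l i ∩ Set.Iio N
  set Q := block s m j ∩ Set.Iio N
  rcases (P + Q).eq_empty_or_nonempty with h | ⟨_, a, ha, b, hb, -⟩
  · rw [h, Set.ncard_empty, Nat.cast_zero]
    positivity
  set ρ := √(r : ℝ)
  set σ := √(s : ℝ)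
  set X := √(N : ℝ)
  have hρ : 1 ≤ ρ := Real.one_le_sqrt.2 (by exact_mod_cast hr)
  have hσ : 1 ≤ σ := Real.one_le_sqrt.2 (by exact_mod_cast hs)
  have hX : 1 ≤ X := Real.one_le_sqrt.2 (by exact_mod_cast (Nat.zero_le a).trans_lt ha.2)
  have huv : ρ ^ l * ρ ^ i ≤ X := sqrt_pow_mul_sqrt_pow_le ha
  have hwz : σ ^ m * σ ^ j ≤ X := sqrt_pow_mul_sqrt_pow_le hb
  have hv : ρ ^ i ≤ X := (le_mul_of_one_le_left (by positivity) (one_le_pow₀ hρ)).trans huv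
  have hz : σ ^ j ≤ X := (le_mul_of_one_le_left (by positivity) (one_le_pow₀ hσ)).trans hwz
  have hPQ : ((P + Q).ncard : ℝ) ^ 2 ≤
      P.ncard * Q.ncard * ((r : ℝ) ^ l * width r i + (s : ℝ) ^ m * width s j + 1) := by
    exact_mod_cast Set.ncard_add_sq_le_of_subset_Icc (P := P) (Q := Q)
      (Set.inter_subset_left.trans (block_subset_Icc r l i))
      (Set.inter_subset_left.trans (block_subset_Icc s m j))
  have hX3 : X * X ≤ X ^ 3 := by nlinarith
  have hX3' : (0 : ℝ) ≤ X ^ 3 := by positivity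
  refine (pow_le_pow_iff_left₀ (by positivity) (by positivity) two_ne_zero).1 ?_
  calc ((P + Q).ncard : ℝ) ^ 2
      ≤ (2 * ρ * ρ ^ i) * (2 * σ * σ ^ j) *
          (ρ * (ρ ^ l) ^ 2 * ρ ^ i + σ * (σ ^ m) ^ 2 * σ ^ j + 1) := by
        refine hPQ.trans ?_
        gcongr ?_ * ?_ * (?_ + ?_ + 1)
        exacts [ncard_block_inter_le hr l i _, ncard_block_inter_le hs m j _,
          pow_mul_width_le r l i, pow_mul_width_le s m j]
    _ = 4 * ρ * σ * (ρ * (ρ ^ l * ρ ^ i) ^ 2 * σ ^ j + σ * (σ ^ m * σ ^ j) ^ 2 * ρ ^ i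
          + ρ ^ i * σ ^ j) := by ring
    _ ≤ 4 * ρ * σ * (ρ * X ^ 2 * X + σ * X ^ 2 * X + X * X) := by gcongr
    _ ≤ 4 * ρ * σ * (4 * ρ * σ * X ^ 3) := by
        gcongr
        nlinarith [mul_le_mul_of_nonneg_right (one_le_mul_of_one_le_of_one_le hρ hσ) hX3',
          mul_le_mul_of_nonneg_right (le_mul_of_one_le_right (by positivity) hσ) hX3',
          mul_le_mul_of_nonneg_right (le_mul_of_one_le_left (by positivity) hρ) hX3']
    _ = (4 * ρ * σ * (N : ℝ) ^ (3 / 4 : ℝ)) ^ 2 := by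
        rw [mul_pow, Real.rpow_three_fourths_sq (Nat.cast_nonneg N)]
        ring

/-- The blocks that can meet `[0, N)`, cut off at `N`. -/
def cover (t N : ℕ) : Set ℕ :=
  ⋃ p ∈ Finset.range (Nat.log t N + 1) ×ˢ Finset.range (Nat.log t N + 1),
    block t p.1 p.2 ∩ Set.Iio N

lemma cover_subset_Iio (t N : ℕ) : cover t N ⊆ Set.Iio N :=
  Set.iUnion₂_subset fun _ _ => Set.inter_subset_right

lemma inter_Iio_subset_insert_cover {t : ℕ} (ht : 2 ≤ t) (N : ℕ) :
    exSet t ∩ Set.Iio N ⊆ insert 0 (cover t N) := by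
  rintro m ⟨hm, hmN⟩
  rw [eq_insert_iUnion_block] at hm
  simp only [Set.mem_insert_iff, Set.mem_iUnion] at hm
  rcases hm with rfl | ⟨l, i, hm⟩
  · exact Set.mem_insert _ _
  have hli : l + i ≤ Nat.log t N :=
    Nat.le_log_of_pow_le (by omega) (pow_lt_of_mem_block_inter_Iio ⟨hm, hmN⟩).le
  refine Set.mem_insert_of_mem _ (Set.mem_biUnion (x := (l, i)) ?_ ⟨hm, hmN⟩)
  simp only [Finset.coe_product, Finset.coe_range, Set.mem_prod, Set.mem_Iio]
  omega

lemma ncard_cover_le {t N : ℕ} (ht : 2 ≤ t) (hN : 3 ≤ N) :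
    ((cover t N).ncard : ℝ) ≤ 18 * √(t : ℝ) * Real.log N ^ 2 * √(N : ℝ) := by
  have hL := natLog_add_one_le_log ht hN
  calc ((cover t N).ncard : ℝ) ≤ (Nat.log t N + 1) ^ 2 * (2 * √(t : ℝ) * √(N : ℝ)) :=
        (Finset.ncard_biUnion_le_card_mul _ _ fun _ _ =>
          ncard_block_inter_Iio_le (by omega) _ _ N).trans_eq (by simp [sq])
    _ ≤ (3 * Real.log N) ^ 2 * (2 * √(t : ℝ) * √(N : ℝ)) := by gcongr
    _ = 18 * √(t : ℝ) * Real.log N ^ 2 * √(N : ℝ) := by ring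

lemma ncard_cover_add_cover_le {r s N : ℕ} (hr : 2 ≤ r) (hs : 2 ≤ s) (hN : 3 ≤ N) :
    ((cover r N + cover s N).ncard : ℝ) ≤
      324 * (√(r : ℝ) * √(s : ℝ)) * Real.log N ^ 4 * (N : ℝ) ^ (3 / 4 : ℝ) := by
  have hLr := natLog_add_one_le_log hr hN
  have hLs := natLog_add_one_le_log hs hN
  rw [cover, cover, Set.iUnion₂_add]
  simp_rw [Set.add_iUnion₂]
  calc _ ≤ (Nat.log r N + 1) ^ 2 * ((Nat.log s N + 1) ^ 2 *
          (4 * √(r : ℝ) * √(s : ℝ) * (N : ℝ) ^ (3 / 4 : ℝ))) :=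
        (Finset.ncard_biUnion_le_card_mul _ _ fun _ _ => Finset.ncard_biUnion_le_card_mul _ _
          fun _ _ => ncard_block_add_block_le (by omega) (by omega) _ _ _ _ N).trans_eq
          (by simp [sq])
    _ ≤ (3 * Real.log N) ^ 2 * ((3 * Real.log N) ^ 2 *
          (4 * √(r : ℝ) * √(s : ℝ) * (N : ℝ) ^ (3 / 4 : ℝ))) := by gcongr
    _ = 324 * (√(r : ℝ) * √(s : ℝ)) * Real.log N ^ 4 * (N : ℝ) ^ (3 / 4 : ℝ) := by ring

lemma block_zero_subset_Iio {t i N : ℕ} (ht : 2 ≤ t) (hN : t ^ (i + 2) ≤ N) :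
    block t 0 i ⊆ Set.Iio N := by
  intro m hm
  have hρ : 1 ≤ √(t : ℝ) := Real.one_le_sqrt.2 (by exact_mod_cast (by omega : 1 ≤ t))
  have hw : width t i ≤ t ^ (i + 1) := Nat.floor_le_of_le <|
    calc √(t : ℝ) ^ (i + 1) ≤ (√(t : ℝ) ^ 2) ^ (i + 1) := by
          gcongr
          nlinarith
      _ = ((t ^ (i + 1) : ℕ) : ℝ) := by rw [Real.sq_sqrt (Nat.cast_nonneg t), Nat.cast_pow]
  have hm' := (block_subset_Icc t 0 i hm).2
  have hti : t ^ i < t ^ (i + 1) := Nat.pow_lt_pow_right ht (Nat.lt_succ_self i)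
  have ht2 : 2 * t ^ (i + 1) ≤ t ^ (i + 2) := by
    rw [pow_succ t (i + 1), mul_comm]
    exact Nat.mul_le_mul_left _ ht
  simp only [pow_zero, zero_add, one_mul] at hm'
  exact Set.mem_Iio.2 (by omega)

lemma ncard_block_zero (t i : ℕ) : (block t 0 i).ncard = width t i + 1 := by
  simp only [block, pow_zero, one_mul, Set.image_id', Set.ncard_Icc_nat]
  omega

lemma le_ncard_inter_Iio {t N : ℕ} (ht : 2 ≤ t) (hN : t ^ 2 ≤ N) :
    (1 / t : ℝ) * √(N : ℝ) ≤ ((exSet t ∩ Set.Iio N).ncard : ℝ) := by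
  obtain ⟨i, hi⟩ : ∃ i, Nat.log t N = i + 2 :=
    ⟨Nat.log t N - 2, by have := Nat.le_log_of_pow_le (by omega) hN; omega⟩
  have hlo : t ^ (i + 2) ≤ N := hi ▸ Nat.pow_log_le_self t ((pow_pos (by omega) 2).trans_le hN).ne'
  have hhi : N < t ^ (i + 3) := by simpa [hi] using Nat.lt_pow_succ_log_self (by omega : 1 < t) N
  calc (1 / t : ℝ) * √(N : ℝ) ≤ (1 / t : ℝ) * √(t : ℝ) ^ (i + 3) := by
        gcongr
        rw [← Real.sqrt_pow (Nat.cast_nonneg t)]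
        exact Real.sqrt_le_sqrt (by exact_mod_cast hhi.le)
    _ = √(t : ℝ) ^ (i + 1) := by
        rw [pow_add _ (i + 1) 2, Real.sq_sqrt (Nat.cast_nonneg t)]
        field_simp
    _ ≤ width t i + 1 := (Nat.lt_floor_add_one _).le
    _ = (block t 0 i).ncard := by rw [ncard_block_zero, Nat.cast_add_one]
    _ ≤ ((exSet t ∩ Set.Iio N).ncard : ℝ) := by
        exact_mod_cast Set.ncard_le_ncard
          (Set.subset_inter (block_subset t 0 i) (block_zero_subset_Iio ht hlo))
          ((Set.finite_Iio N).subset Set.inter_subset_right)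

lemma ncard_inter_Iio_le {t N : ℕ} (ht : 2 ≤ t) (hN : 3 ≤ N) :
    ((exSet t ∩ Set.Iio N).ncard : ℝ) ≤ 19 * √(t : ℝ) * Real.log N ^ 2 * √(N : ℝ) := by
  have hρ : 1 ≤ √(t : ℝ) := Real.one_le_sqrt.2 (by exact_mod_cast (by omega : 1 ≤ t))
  have hX : 1 ≤ √(N : ℝ) := Real.one_le_sqrt.2 (by exact_mod_cast (by omega : 1 ≤ N))
  have hlog := one_le_log_natCast hN
  have hfin := ((Set.finite_Iio N).subset (cover_subset_Iio t N)).insert 0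
  have hcount : ((exSet t ∩ Set.Iio N).ncard : ℝ) ≤ (cover t N).ncard + 1 := by
    exact_mod_cast (Set.ncard_le_ncard (inter_Iio_subset_insert_cover ht N) hfin).trans
      (Set.ncard_insert_le _ _)
  have hone : 1 ≤ √(t : ℝ) * Real.log N ^ 2 * √(N : ℝ) :=
    one_le_mul_of_one_le_of_one_le (one_le_mul_of_one_le_of_one_le hρ (one_le_pow₀ hlog)) hX
  linarith [ncard_cover_le ht hN]

lemma ncard_add_inter_Iio_le {r s N : ℕ} (hr : 2 ≤ r) (hs : 2 ≤ s) (hN : 3 ≤ N) :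
    (((exSet r + exSet s) ∩ Set.Iio N).ncard : ℝ) ≤
      361 * (√(r : ℝ) * √(s : ℝ)) * Real.log N ^ 4 * (N : ℝ) ^ (3 / 4 : ℝ) := by
  have hρ : 1 ≤ √(r : ℝ) := Real.one_le_sqrt.2 (by exact_mod_cast (by omega : 1 ≤ r))
  have hσ : 1 ≤ √(s : ℝ) := Real.one_le_sqrt.2 (by exact_mod_cast (by omega : 1 ≤ s))
  have hN1 : (1 : ℝ) ≤ N := by exact_mod_cast (by omega : 1 ≤ N)
  have hXY : √(N : ℝ) ≤ (N : ℝ) ^ (3 / 4 : ℝ) := by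
    rw [Real.sqrt_eq_rpow]
    exact Real.rpow_le_rpow_of_exponent_le hN1 (by norm_num)
  have hY : 1 ≤ (N : ℝ) ^ (3 / 4 : ℝ) := Real.one_le_rpow hN1 (by norm_num)
  have hlog := one_le_log_natCast hN
  have hfin (t : ℕ) : (cover t N).Finite := (Set.finite_Iio N).subset (cover_subset_Iio t N)
  have hK : 1 ≤ √(r : ℝ) * √(s : ℝ) * Real.log N ^ 4 * (N : ℝ) ^ (3 / 4 : ℝ) := one_le_mul_of_one_le_of_one_le (one_le_mul_of_one_le_of_one_le
    (one_le_mul_of_one_le_of_one_le hρ hσ) (one_le_pow₀ hlog)) hY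
  have hKr : √(r : ℝ) * Real.log N ^ 2 * √(N : ℝ) ≤
      √(r : ℝ) * √(s : ℝ) * Real.log N ^ 4 * (N : ℝ) ^ (3 / 4 : ℝ) := by
    gcongr
    · exact le_mul_of_one_le_right (by positivity) hσ
    · norm_num
  have hKs : √(s : ℝ) * Real.log N ^ 2 * √(N : ℝ) ≤
      √(r : ℝ) * √(s : ℝ) * Real.log N ^ 4 * (N : ℝ) ^ (3 / 4 : ℝ) := by
    gcongr
    · exact le_mul_of_one_le_left (by positivity) hρ
    · norm_num
  have hsub : (exSet r + exSet s) ∩ Set.Iio N ⊆ insert 0 (cover r N) + insert 0 (cover s N) :=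
    (Set.add_inter_Iio_subset _ _ N).trans
      (Set.add_subset_add (inter_Iio_subset_insert_cover hr N) (inter_Iio_subset_insert_cover hs N))
  have hcount : (((exSet r + exSet s) ∩ Set.Iio N).ncard : ℝ) ≤
      1 + (cover r N).ncard + (cover s N).ncard + (cover r N + cover s N).ncard := by
    exact_mod_cast (Set.ncard_le_ncard hsub (((hfin r).insert 0).add ((hfin s).insert 0))).trans
      (Set.ncard_insert_zero_add_insert_zero_le (hfin r) (hfin s))
  linarith [ncard_cover_le hr hN, ncard_cover_le hs hN, ncard_cover_add_cover_le hr hs hN]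

theorem tendsto_log_ncard_div_log {t : ℕ} (ht : 2 ≤ t) :
    Tendsto (fun N : ℕ => Real.log (({n ∈ exSet t | n < N}).ncard : ℝ) / Real.log N)
      atTop (𝓝 (1 / 2)) := by
  have hρ : 0 < √(t : ℝ) := Real.sqrt_pos.2 (by exact_mod_cast (by omega : 0 < t))
  refine tendsto_log_div_log_of_le_of_le (c := 1 / t) (C := 19 * √(t : ℝ)) (k := 2)
    (one_div_pos.2 (by exact_mod_cast (by omega : 0 < t))) (mul_pos (by norm_num) hρ) ?_ ?_
  · filter_upwards [eventually_ge_atTop (t ^ 2)] with N hN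
    rw [← Real.sqrt_eq_rpow]
    exact le_ncard_inter_Iio ht hN
  · filter_upwards [eventually_ge_atTop 3] with N hN
    rw [← Real.sqrt_eq_rpow]
    exact ncard_inter_Iio_le ht hN

theorem upperMassDim_add_le {r s : ℕ} (hr : 2 ≤ r) (hs : 2 ≤ s) :
    upperMassDim (exSet r + exSet s) ≤ 3 / 4 := by
  have hρσ : 0 < √(r : ℝ) * √(s : ℝ) :=
    mul_pos (Real.sqrt_pos.2 (by exact_mod_cast (by omega : 0 < r)))
      (Real.sqrt_pos.2 (by exact_mod_cast (by omega : 0 < s)))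
  refine upperMassDim_le (C := 361 * (√(r : ℝ) * √(s : ℝ))) (k := 4)
    (by simpa using Set.add_mem_add (zero_mem r) (zero_mem s)) (mul_pos (by norm_num) hρσ) ?_
  filter_upwards [eventually_ge_atTop 3] with N hN
  exact ncard_add_inter_Iio_le hr hs hN

end exSet

/-- For `2 ≤ r < s`, the sets `A = exSet r` and `B = exSet s` have mass dimension `1/2`,
satisfy `rA ⊆ A`, `sB ⊆ B`, `Φ_r(A) = A`, `Φ_s(B) = B`, and yet
`upper-dim_M(A+B) ≤ 4/5 < min(dim_M A + dim_M B, 1)`. -/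
theorem stmt19 (r s : ℕ) (hr : 2 ≤ r) (hrs : r < s) :
    Tendsto (fun N : ℕ =>
        Real.log (({n ∈ exSet r | n < N}).ncard : ℝ) / Real.log N) atTop (𝓝 (1 / 2)) ∧
    Tendsto (fun N : ℕ =>
        Real.log (({n ∈ exSet s | n < N}).ncard : ℝ) / Real.log N) atTop (𝓝 (1 / 2)) ∧
    (∀ n ∈ exSet r, r * n ∈ exSet r) ∧
    (∀ n ∈ exSet s, s * n ∈ exSet s) ∧
    (fun n : ℕ => n / r) '' exSet r = exSet r ∧
    (fun n : ℕ => n / s) '' exSet s = exSet s ∧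
    upperMassDim (exSet r + exSet s) ≤ 4 / 5 ∧
    upperMassDim (exSet r + exSet s) < min ((1 : ℝ) / 2 + 1 / 2) 1 := by
  have hs : 2 ≤ s := by omega
  have hdim := exSet.upperMassDim_add_le hr hs
  refine ⟨exSet.tendsto_log_ncard_div_log hr, exSet.tendsto_log_ncard_div_log hs,
    fun _ => exSet.mul_mem, fun _ => exSet.mul_mem, exSet.image_div hr, exSet.image_div hs,
    by linarith, ?_⟩
  norm_num
  linarith
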